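/- arXiv:1611.08150 — 6 statements merged into one kernel-verified Lean document; each statement's English description precedes it below -/
import Mathlib

section
/- Let (P, ≤) be a partial order with largest element 1, and let T ⊆ P be a subtree of P (i.e., 1 ∈ T and T with the restricted order is a tree: for every t ∈ T the set of predecessors pred_T(t) = {s ∈ T : s ≥ t} is well-ordered by the reverse order). Then T is maximal with respect to end-extension if and only if for every p ∈ P, either there is q ∈ T with q ≤ p, or there are incomparable elements q, r ∈ T with p ≤ q and p ≤ r. -/
/-!
If some `p ∉ T` lies below no element of `T` and the elements of `T` above `p` form a chain,
then `insert p T` is again a subtree end-extending `T`; so for a maximal `T` every `p` is above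
an element of `T` or below two incomparable ones. Conversely, an end-extension cannot add a point
above an element `q` of `T` (it would become a predecessor of `q`), nor a point below two
incomparable elements of `T` (predecessor sets in a subtree are chains).
-/

/-- The set of predecessors of `t` in `T` (including `t` itself):
`pred_T(t) = {s ∈ T : s ≥ t}`. -/
def TreePred {P : Type*} [PartialOrder P] (T : Set P) (t : P) : Set P :=
  {s ∈ T | t ≤ s}

/-- `T` is a subtree of the partial order `P` with largest element `⊤`:
`⊤ ∈ T` and for every `t ∈ T` the set of predecessors of `t` in `T` is
well-ordered by the reverse order, i.e. every nonempty subset of `pred_T(t)`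
has a greatest element. -/
def IsSubtree {P : Type*} [PartialOrder P] [OrderTop P] (T : Set P) : Prop :=
  ⊤ ∈ T ∧ ∀ t ∈ T, ∀ S ⊆ TreePred T t, S.Nonempty → ∃ m ∈ S, ∀ s ∈ S, s ≤ m

/-- `T` end-extends `S`: `S ⊆ T` and `pred_T(s) = pred_S(s)` for all `s ∈ S`. -/
def EndExt {P : Type*} [PartialOrder P] (S T : Set P) : Prop :=
  S ⊆ T ∧ ∀ s ∈ S, TreePred T s = TreePred S s

section

variable {P : Type*} [PartialOrder P] {S T : Set P} {p q t x : P}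

theorem EndExt.mem_of_le (h : EndExt S T) (hq : q ∈ S) (hx : x ∈ T) (hqx : q ≤ x) : x ∈ S := by
  have hx' : x ∈ TreePred T q := ⟨hx, hqx⟩
  rw [h.2 q hq] at hx'
  exact hx'.1

theorem treePred_insert_of_not_le (htp : ¬ t ≤ p) : TreePred (insert p T) t = TreePred T t := by
  ext s
  constructor
  · rintro ⟨rfl | hs, hts⟩
    · exact absurd hts htp
    · exact ⟨hs, hts⟩
  · rintro ⟨hs, hts⟩
    exact ⟨Or.inr hs, hts⟩

theorem endExt_insert (hp : ∀ q ∈ T, ¬ q ≤ p) : EndExt T (insert p T) :=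
  ⟨Set.subset_insert p T, fun t ht => treePred_insert_of_not_le (hp t ht)⟩

variable [OrderTop P]

theorem IsSubtree.isChain_treePred (hT : IsSubtree T) (ht : t ∈ T) :
    IsChain (· ≤ ·) (TreePred T t) := by
  intro q hq r hr _
  obtain ⟨m, hm, hmax⟩ := hT.2 t ht {q, r} (Set.insert_subset hq (Set.singleton_subset_iff.2 hr))
    ⟨q, Set.mem_insert q {r}⟩
  rcases hm with rfl | rfl
  · exact Or.inr (hmax r (by simp))
  · exact Or.inl (hmax q (by simp))

theorem IsSubtree.exists_greatest_of_subset_treePred_insert (hT : IsSubtree T)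
    (hchain : IsChain (· ≤ ·) (TreePred T p)) {S : Set P} (hS : S ⊆ TreePred (insert p T) p)
    (hSne : S.Nonempty) : ∃ m ∈ S, ∀ s ∈ S, s ≤ m := by
  by_cases hST : (S ∩ T).Nonempty
  · obtain ⟨s₀, hs₀S, hs₀T⟩ := hST
    have hps₀ : p ≤ s₀ := (hS hs₀S).2
    -- a greatest element of the part of `S ∩ T` above `s₀` dominates all of `S`
    obtain ⟨m, ⟨⟨hmS, -⟩, hs₀m⟩, hm⟩ := hT.2 s₀ hs₀T {s ∈ S ∩ T | s₀ ≤ s}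
      (fun s hs => ⟨hs.1.2, hs.2⟩) ⟨s₀, ⟨hs₀S, hs₀T⟩, le_rfl⟩
    refine ⟨m, hmS, fun s hs => ?_⟩
    obtain ⟨hs' | hsT, hps⟩ := hS hs
    · exact hs' ▸ hps₀.trans hs₀m
    · rcases hchain.total ⟨hs₀T, hps₀⟩ ⟨hsT, hps⟩ with h | h
      · exact hm s ⟨⟨hs, hsT⟩, h⟩
      · exact h.trans hs₀m
  · have hSp : ∀ s ∈ S, s = p := fun s hs =>
      (hS hs).1.resolve_right fun hsT => hST ⟨s, hs, hsT⟩
    obtain ⟨s, hs⟩ := hSne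
    exact ⟨s, hs, fun x hx => ((hSp x hx).trans (hSp s hs).symm).le⟩

theorem IsSubtree.insert (hT : IsSubtree T) (hp : ∀ q ∈ T, ¬ q ≤ p)
    (hchain : IsChain (· ≤ ·) (TreePred T p)) : IsSubtree (insert p T) := by
  refine ⟨Or.inr hT.1, fun t ht S hS hSne => ?_⟩
  rcases ht with rfl | ht
  · exact hT.exists_greatest_of_subset_treePred_insert hchain hS hSne
  · rw [treePred_insert_of_not_le (hp t ht)] at hS
    exact hT.2 t ht S hS hSne

end

/-- A subtree `T` of `P` is maximal with respect to end-extension iff for every `p ∈ P`,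
either there is `q ∈ T` with `q ≤ p`, or there are incomparable `q, r ∈ T`
with `p ≤ q` and `p ≤ r`. -/
theorem subtree_maximal_iff {P : Type*} [PartialOrder P] [OrderTop P]
    (T : Set P) (hT : IsSubtree T) :
    (∀ T', IsSubtree T' → EndExt T T' → T' = T) ↔
      ∀ p : P, (∃ q ∈ T, q ≤ p) ∨
        ∃ q ∈ T, ∃ r ∈ T, ¬ q ≤ r ∧ ¬ r ≤ q ∧ p ≤ q ∧ p ≤ r := by
  constructor
  · intro hmax p
    by_contra! h
    obtain ⟨hbelow, hincomp⟩ := h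
    have hchain : IsChain (· ≤ ·) (TreePred T p) := by
      rintro q ⟨hq, hpq⟩ r ⟨hr, hpr⟩ -
      by_contra! hqr
      exact hincomp q hq r hr hqr.1 hqr.2 hpq hpr
    have hpT : p ∉ T := fun hp => hbelow p hp le_rfl
    exact hpT (hmax _ (hT.insert hbelow hchain) (endExt_insert hbelow) ▸ Set.mem_insert p T)
  · intro hcond T' hT' hext
    refine Set.Subset.antisymm (fun x hx => ?_) hext.1
    rcases hcond x with ⟨q, hq, hqx⟩ | ⟨q, hq, r, hr, hqr, hrq, hxq, hxr⟩
    · exact hext.mem_of_le hq hx hqx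
    · have := (hT'.isChain_treePred hx).total ⟨hext.1 hq, hxq⟩ ⟨hext.1 hr, hxr⟩
      exact (this.elim hqr hrq).elim
end

section
/- There is a maximal subtree of (P(ω) \ {∅}, ⊆) of size ω (countably infinite). -/
/-! The tails `[n, ∞)` together with the singletons `{n}` form a countable tree: a node's
predecessors are itself and tails, and tails are well-ordered by reverse inclusion. It is
maximal because it contains every singleton: any node `A` of an end-extension contains some
`n`, so `A` is a predecessor of `{n}` there, and predecessors of old nodes are old. -/

/-- The predecessors of `t` in `T` with respect to inclusion. -/
def InclPred (T : Set (Set ℕ)) (t : Set ℕ) : Set (Set ℕ) := {s ∈ T | t ⊆ s}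

/-- `T` is a subtree of `(P(ω) \ {∅}, ⊆)`: all members are nonempty, the largest
element `ω` belongs to `T`, and the predecessors of each node are well-ordered by
reverse inclusion (every nonempty subset of a predecessor set has a `⊆`-greatest element). -/
def IsInclTree (T : Set (Set ℕ)) : Prop :=
  (∀ A ∈ T, A.Nonempty) ∧ Set.univ ∈ T ∧
    ∀ t ∈ T, ∀ S ⊆ InclPred T t, S.Nonempty → ∃ m ∈ S, ∀ s ∈ S, s ⊆ m

/-- `T` end-extends `S` (as subtrees of `(P(ω) \ {∅}, ⊆)`). -/
def InclEndExt (S T : Set (Set ℕ)) : Prop :=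
  S ⊆ T ∧ ∀ s ∈ S, InclPred T s = InclPred S s

theorem InclEndExt.eq_of_singleton_mem {T T' : Set (Set ℕ)} (hT' : ∀ A ∈ T', A.Nonempty)
    (hext : InclEndExt T T') (hsingleton : ∀ n : ℕ, ({n} : Set ℕ) ∈ T) : T' = T := by
  refine hext.1.antisymm' fun A hA => ?_
  obtain ⟨n, hn⟩ := hT' A hA
  have hpred : A ∈ InclPred T' {n} := ⟨hA, Set.singleton_subset_iff.mpr hn⟩
  rw [hext.2 _ (hsingleton n)] at hpred
  exact hpred.1

def tailsAndSingletons : Set (Set ℕ) :=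
  Set.range (Set.Ici : ℕ → Set ℕ) ∪ Set.range (fun n : ℕ => ({n} : Set ℕ))

namespace tailsAndSingletons

theorem singleton_mem (n : ℕ) : ({n} : Set ℕ) ∈ tailsAndSingletons := Or.inr ⟨n, rfl⟩

theorem nonempty_of_mem {A : Set ℕ} : A ∈ tailsAndSingletons → A.Nonempty := by
  rintro (⟨n, rfl⟩ | ⟨n, rfl⟩)
  exacts [Set.nonempty_Ici, Set.singleton_nonempty n]

theorem eq_or_exists_eq_Ici_of_mem_inclPred {t s : Set ℕ} (ht : t ∈ tailsAndSingletons)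
    (hs : s ∈ InclPred tailsAndSingletons t) : s = t ∨ ∃ k, s = Set.Ici k := by
  obtain ⟨⟨k, rfl⟩ | ⟨j, rfl⟩, hts⟩ := hs
  · exact Or.inr ⟨k, rfl⟩
  · exact Or.inl ((Set.subset_singleton_iff_eq.mp hts).resolve_left
      (nonempty_of_mem ht).ne_empty).symm

theorem isInclTree : IsInclTree tailsAndSingletons := by
  classical
  refine ⟨fun A => nonempty_of_mem, Or.inl ⟨0, Set.Ici_bot⟩, fun t ht S hS hSne => ?_⟩
  have hS_cases : ∀ s ∈ S, s = t ∨ ∃ k, s = Set.Ici k :=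
    fun s hs => eq_or_exists_eq_Ici_of_mem_inclPred ht (hS hs)
  by_cases htail : ∃ k, Set.Ici k ∈ S
  · -- the tail of least index in `S` is the largest element of `S`
    have hk₀ : Set.Ici (Nat.find htail) ∈ S := Nat.find_spec htail
    refine ⟨_, hk₀, fun s hs => ?_⟩
    rcases hS_cases s hs with rfl | ⟨k, rfl⟩
    · exact (hS hk₀).2
    · exact Set.Ici_subset_Ici.mpr (Nat.find_min' htail hs)
  · obtain ⟨s₀, hs₀⟩ := hSne
    have hS_eq : ∀ s ∈ S, s = t := fun s hs =>
      (hS_cases s hs).resolve_right fun ⟨k, hk⟩ => htail ⟨k, hk ▸ hs⟩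
    exact ⟨s₀, hs₀, fun s hs => (hS_eq s hs).trans (hS_eq s₀ hs₀).symm |>.subset⟩

theorem countable : tailsAndSingletons.Countable :=
  (Set.countable_range _).union (Set.countable_range _)

theorem infinite : tailsAndSingletons.Infinite :=
  (Set.infinite_range_of_injective Set.singleton_injective).mono Set.subset_union_right

end tailsAndSingletons

/-- There is a countably infinite maximal subtree of `(P(ω) \ {∅}, ⊆)`. -/
theorem exists_countable_maximal_incl_tree :
    ∃ T : Set (Set ℕ), IsInclTree T ∧
      (∀ T', IsInclTree T' → InclEndExt T T' → T' = T) ∧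
      T.Countable ∧ T.Infinite :=
  ⟨tailsAndSingletons, tailsAndSingletons.isInclTree,
    fun _ hT' hext => hext.eq_of_singleton_mem hT'.1 tailsAndSingletons.singleton_mem,
    tailsAndSingletons.countable, tailsAndSingletons.infinite⟩
end

section
/- There is a maximal subtree of (P(ω) \ {∅}, ⊆) of size continuum. -/
/-!
A subtree is maximal as soon as every set `A` outside it either contains a node
(then `A` would be a new predecessor of that node) or lies below two incomparable nodes (then
the predecessors of `A` would not form a chain). Identify `ℕ` with `ℕ × Bool` via `Nat.bit`:
below the root `ω` put the pairs `{bit false k, bit true k}` and the selector sets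
`{bit (f k) k | k}` of all `f : ℕ → Bool`; these form an antichain. A set containing no pair
misses a point of every pair, so it lies in the selector set of some `f`; if it misses a whole
pair, it also lies in the selector set of `f` changed at that pair, and otherwise it is the
selector set of `f`. There are continuum many selector sets.
-/

open Set

theorem IsInclTree.subset_or_subset {T : Set (Set ℕ)} (hT : IsInclTree T) {t B C : Set ℕ}
    (ht : t ∈ T) (hB : B ∈ InclPred T t) (hC : C ∈ InclPred T t) : B ⊆ C ∨ C ⊆ B := by
  obtain ⟨m, hm, hmax⟩ :=
    hT.2.2 t ht {B, C} (by rintro s (rfl | rfl) <;> assumption) ⟨B, Or.inl rfl⟩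
  rcases hm with rfl | rfl
  · exact Or.inr (hmax C (Or.inr rfl))
  · exact Or.inl (hmax B (Or.inl rfl))

def InclSaturated (T : Set (Set ℕ)) : Prop :=
  ∀ A : Set ℕ, A.Nonempty → A ∉ T →
    (∃ B ∈ T, B ⊆ A) ∨ ∃ B ∈ T, ∃ C ∈ T, A ⊆ B ∧ A ⊆ C ∧ ¬ B ⊆ C ∧ ¬ C ⊆ B

theorem InclSaturated.eq_of_inclEndExt {T T' : Set (Set ℕ)} (hT : InclSaturated T)
    (hT' : IsInclTree T') (hext : InclEndExt T T') : T' = T := by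
  refine Subset.antisymm (fun A hA => ?_) hext.1
  by_contra hAT
  rcases hT A (hT'.1 A hA) hAT with ⟨B, hB, hBA⟩ | ⟨B, hB, C, hC, hAB, hAC, hBC, hCB⟩
  · have hpred : A ∈ InclPred T' B := ⟨hA, hBA⟩
    rw [hext.2 B hB] at hpred
    exact hAT hpred.1
  · exact (hT'.subset_or_subset hA ⟨hext.1 hB, hAB⟩ ⟨hext.1 hC, hAC⟩).elim hBC hCB

theorem isInclTree_insert_univ {S : Set (Set ℕ)} (hne : ∀ A ∈ S, A.Nonempty)
    (hS : IsAntichain (· ⊆ ·) S) : IsInclTree (insert univ S) := by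
  have hpred : ∀ t ∈ insert univ S, InclPred (insert univ S) t ⊆ {univ, t} := by
    rintro t ht s ⟨hs | hs, hts⟩
    · exact Or.inl hs
    · rcases ht with rfl | ht
      · exact Or.inl (univ_subset_iff.mp hts)
      · exact Or.inr (hS.eq ht hs hts).symm
  refine ⟨?_, mem_insert _ _, fun t ht P hP ⟨p, hp⟩ => ?_⟩
  · rintro A (rfl | hA)
    exacts [univ_nonempty, hne A hA]
  by_cases hu : univ ∈ P
  · exact ⟨univ, hu, fun s _ => subset_univ s⟩
  · have hPt : ∀ s ∈ P, s = t := fun s hs =>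
      (hpred t ht (hP hs)).resolve_left (ne_of_mem_of_not_mem hs hu)
    exact ⟨p, hp, fun s hs => ((hPt s hs).trans (hPt p hp).symm).subset⟩

namespace Nat

def pairSet (k : ℕ) : Set ℕ := {n | n.div2 = k}

def selectorSet (f : ℕ → Bool) : Set ℕ := {n | n.bodd = f n.div2}

theorem forall_bit {P : ℕ → Prop} : (∀ n, P n) ↔ ∀ b k, P (bit b k) :=
  ⟨fun h _ _ => h _, fun h n => bit_bodd_div2 n ▸ h _ _⟩

@[simp]
theorem bit_mem_pairSet {b : Bool} {j k : ℕ} : bit b j ∈ pairSet k ↔ j = k := by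
  simp [pairSet, div2_bit]

@[simp]
theorem bit_mem_selectorSet {b : Bool} {k : ℕ} {f : ℕ → Bool} :
    bit b k ∈ selectorSet f ↔ b = f k := by
  simp [selectorSet, div2_bit, bodd_bit]

theorem pairSet_subset_iff {k : ℕ} {A : Set ℕ} : pairSet k ⊆ A ↔ ∀ b, bit b k ∈ A := by
  simp only [Set.subset_def, forall_bit (P := fun n => n ∈ pairSet k → n ∈ A), bit_mem_pairSet]
  exact ⟨fun h b => h b k rfl, fun h b _ hj => hj ▸ h b⟩

theorem selectorSet_subset_iff {f : ℕ → Bool} {A : Set ℕ} :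
    selectorSet f ⊆ A ↔ ∀ k, bit (f k) k ∈ A := by
  simp only [Set.subset_def, forall_bit (P := fun n => n ∈ selectorSet f → n ∈ A),
    bit_mem_selectorSet]
  exact ⟨fun h k => h _ k rfl, fun h _ k hb => hb ▸ h k⟩

theorem subset_selectorSet_iff {f : ℕ → Bool} {A : Set ℕ} :
    A ⊆ selectorSet f ↔ ∀ k, bit (!f k) k ∉ A := by
  simp only [Set.subset_def, forall_bit (P := fun n => n ∈ A → n ∈ selectorSet f),
    bit_mem_selectorSet]
  refine ⟨fun h k hk => by simpa using h _ k hk, fun h b k hb => ?_⟩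
  by_contra hne
  exact h k (by rwa [← Bool.eq_not_of_ne hne])

theorem pairSet_subset_pairSet_iff {j k : ℕ} : pairSet j ⊆ pairSet k ↔ j = k := by
  simp [pairSet_subset_iff]

theorem selectorSet_subset_selectorSet_iff {f g : ℕ → Bool} :
    selectorSet f ⊆ selectorSet g ↔ f = g := by
  simp [selectorSet_subset_iff, funext_iff]

theorem selectorSet_injective : Function.Injective selectorSet := fun _ _ h =>
  selectorSet_subset_selectorSet_iff.1 h.subset

theorem not_pairSet_subset_selectorSet (k : ℕ) (f : ℕ → Bool) : ¬ pairSet k ⊆ selectorSet f := by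
  simp [subset_selectorSet_iff]

theorem not_selectorSet_subset_pairSet (f : ℕ → Bool) (k : ℕ) : ¬ selectorSet f ⊆ pairSet k := by
  simp only [selectorSet_subset_iff, bit_mem_pairSet, not_forall]
  exact ⟨k + 1, k.succ_ne_self⟩

theorem isAntichain_pairSet_selectorSet :
    IsAntichain (· ⊆ ·) (range pairSet ∪ range selectorSet) := by
  rintro _ (⟨j, rfl⟩ | ⟨f, rfl⟩) _ (⟨k, rfl⟩ | ⟨g, rfl⟩) hne
  · exact fun h => hne (congrArg pairSet (pairSet_subset_pairSet_iff.1 h))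
  · exact not_pairSet_subset_selectorSet j g
  · exact not_selectorSet_subset_pairSet f k
  · exact fun h => hne (congrArg selectorSet (selectorSet_subset_selectorSet_iff.1 h))

end Nat

open Nat

def selectorTree : Set (Set ℕ) := insert univ (range pairSet ∪ range selectorSet)

theorem isInclTree_selectorTree : IsInclTree selectorTree := by
  refine isInclTree_insert_univ ?_ isAntichain_pairSet_selectorSet
  rintro _ (⟨k, rfl⟩ | ⟨f, rfl⟩)
  exacts [⟨bit false k, bit_mem_pairSet.2 rfl⟩, ⟨bit (f 0) 0, bit_mem_selectorSet.2 rfl⟩]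

theorem inclSaturated_selectorTree : InclSaturated selectorTree := by
  intro A _ hA
  by_cases hpair : ∃ k, pairSet k ⊆ A
  · obtain ⟨k, hk⟩ := hpair
    exact Or.inl ⟨pairSet k, Or.inr (Or.inl ⟨k, rfl⟩), hk⟩
  simp only [pairSet_subset_iff, not_exists, not_forall] at hpair
  choose g hg using hpair
  set f : ℕ → Bool := fun k => !g k
  have hAf : A ⊆ selectorSet f := subset_selectorSet_iff.2 (by simpa [f] using hg)
  by_cases hmiss : ∃ k, bit (f k) k ∉ A
  · obtain ⟨k, hk⟩ := hmiss
    have hAf' : A ⊆ selectorSet (Function.update f k (!f k)) := by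
      refine subset_selectorSet_iff.2 fun j => ?_
      rcases eq_or_ne j k with rfl | hjk
      · simpa using hk
      · simpa [Function.update_of_ne hjk] using subset_selectorSet_iff.1 hAf j
    have hff' : f ≠ Function.update f k (!f k) := fun h => by
      simpa using congrFun h k
    refine Or.inr ⟨_, Or.inr (Or.inr ⟨f, rfl⟩), _, Or.inr (Or.inr ⟨_, rfl⟩), hAf, hAf', ?_, ?_⟩
    · exact mt selectorSet_subset_selectorSet_iff.1 hff'
    · exact mt selectorSet_subset_selectorSet_iff.1 hff'.symm
  · push Not at hmiss
    exact absurd (hAf.antisymm (selectorSet_subset_iff.2 hmiss) ▸ Or.inr (Or.inr ⟨f, rfl⟩)) hA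

open scoped Cardinal in
theorem mk_selectorTree : #selectorTree = 𝔠 := by
  refine le_antisymm ?_ ?_
  · exact (Cardinal.mk_set_le selectorTree).trans_eq Cardinal.mk_set_nat
  · calc 𝔠 = #(ℕ → Bool) := by simp
      _ = #(range selectorSet) := (Cardinal.mk_range_eq _ selectorSet_injective).symm
      _ ≤ #selectorTree :=
        Cardinal.mk_le_mk_of_subset (subset_union_right.trans (subset_insert _ _))

/-- There is a maximal subtree of `(P(ω) \ {∅}, ⊆)` of size continuum. -/
theorem exists_continuum_maximal_incl_tree :
    ∃ T : Set (Set ℕ), IsInclTree T ∧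
      (∀ T', IsInclTree T' → InclEndExt T T' → T' = T) ∧
      Cardinal.mk ↥T = Cardinal.continuum :=
  ⟨selectorTree, isInclTree_selectorTree,
    fun _ => inclSaturated_selectorTree.eq_of_inclEndExt, mk_selectorTree⟩
end

section
/- The tree number tr satisfies r ≤ tr, where r is the reaping number: every maximal subtree of ([ω]^ω, ⊆*) gives rise to a reaping family of the same cardinality, hence the least size of a maximal tree in P(ω)/fin is at least the reaping number. -/
/-!
Maximality of a tree `T` says that every infinite `B` either lies `⊆*`-above a node, or lies
`⊆*`-below two incomparable nodes `u, v` and is then almost disjoint from `u \ v`. So the nodes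
together with the differences of incomparable nodes reap, and there are at most `#T * #T` of them.
This is `#T` because `T` is infinite: no countable family is reaping, as a single set splits every
member of a countable family of infinite sets. Finally, maximal trees exist by Zorn's lemma for
end-extension: a set violating maximality could be added to the tree as a new leaf.
-/

/-- `A ⊆* B`: almost inclusion, `A \ B` is finite. -/
def AlmostSubset (A B : Set ℕ) : Prop := (A \ B).Finite

/-- `A` and `B` are `⊆*`-incomparable. -/
def StarIncomp (A B : Set ℕ) : Prop := ¬ AlmostSubset A B ∧ ¬ AlmostSubset B A

/-- The predecessors of `t` in `T` with respect to `⊆*` (including `t` itself). -/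
def StarPred (T : Set (Set ℕ)) (t : Set ℕ) : Set (Set ℕ) := {s ∈ T | AlmostSubset t s}

/-- `T` is a subtree of `([ω]^ω, ⊆*)`: all members are infinite, the largest element
`ω` belongs to `T`, distinct members of `T` are not almost equal (so `⊆*` is a genuine
partial order on `T`), and the predecessors of each node are well-ordered by reverse
`⊆*` (every nonempty subset of a predecessor set has a `⊆*`-greatest element). -/
def IsStarTree (T : Set (Set ℕ)) : Prop :=
  (∀ A ∈ T, A.Infinite) ∧ Set.univ ∈ T ∧
    (∀ s ∈ T, ∀ t ∈ T, AlmostSubset s t → AlmostSubset t s → s = t) ∧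
    ∀ t ∈ T, ∀ S ⊆ StarPred T t, S.Nonempty → ∃ m ∈ S, ∀ s ∈ S, AlmostSubset s m

/-- `T` end-extends `S` (as subtrees of `([ω]^ω, ⊆*)`). -/
def StarEndExt (S T : Set (Set ℕ)) : Prop :=
  S ⊆ T ∧ ∀ s ∈ S, StarPred T s = StarPred S s

/-- `T` is a maximal subtree of `([ω]^ω, ⊆*)`: for every infinite `C ⊆ ω` either some
`B ∈ T` satisfies `B ⊆* C`, or there are `⊆*`-incomparable `B, B' ∈ T` with
`C ⊆* B` and `C ⊆* B'`. -/
def IsMaxStarTree (T : Set (Set ℕ)) : Prop :=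
  IsStarTree T ∧ ∀ C : Set ℕ, C.Infinite →
    (∃ B ∈ T, AlmostSubset B C) ∨
      ∃ B ∈ T, ∃ B' ∈ T, StarIncomp B B' ∧ AlmostSubset C B ∧ AlmostSubset C B'

/-- `s` and `t` lie on the same level of `T`: their predecessor sets (which are
well-orders under `⊆*`) are order isomorphic, i.e. have the same order type. -/
def SameLevel (T : Set (Set ℕ)) (s t : Set ℕ) : Prop :=
  Nonempty ((fun a b : StarPred T s => AlmostSubset a.1 b.1) ≃r
    (fun a b : StarPred T t => AlmostSubset a.1 b.1))

/-- `T` has countable levels. -/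
def CountableLevels (T : Set (Set ℕ)) : Prop :=
  ∀ t ∈ T, {s ∈ T | SameLevel T s t}.Countable

/-- A reaping family: for every infinite `B ⊆ ω` some member `A` satisfies
`A ∩ B` finite or `A ⊆* B`. -/
def IsReaping (𝒜 : Set (Set ℕ)) : Prop :=
  (∀ A ∈ 𝒜, A.Infinite) ∧
    ∀ B : Set ℕ, B.Infinite → ∃ A ∈ 𝒜, (A ∩ B).Finite ∨ AlmostSubset A B

/-- The reaping number `𝔯`. -/
noncomputable def reapingNumber : Cardinal :=
  sInf {c | ∃ 𝒜 : Set (Set ℕ), IsReaping 𝒜 ∧ Cardinal.mk ↥𝒜 = c}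

/-- The tree number `𝔱𝔯`: the least size of a maximal subtree of `([ω]^ω, ⊆*)`. -/
noncomputable def treeNumber : Cardinal :=
  sInf {c | ∃ T : Set (Set ℕ), IsMaxStarTree T ∧ Cardinal.mk ↥T = c}

theorem almostSubset_refl (A : Set ℕ) : AlmostSubset A A := by
  simp [AlmostSubset]

theorem AlmostSubset.trans {A B C : Set ℕ} (hAB : AlmostSubset A B) (hBC : AlmostSubset B C) :
    AlmostSubset A C :=
  (hAB.union hBC).subset (sdiff_triangle A B C)

theorem exists_strictMono_forall_mem (X : ℕ → Set ℕ) (hX : ∀ k, (X k).Infinite) :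
    ∃ a : ℕ → ℕ, StrictMono a ∧ ∀ k, a k ∈ X k :=
  Filter.extraction_forall_of_frequently fun k => Nat.frequently_atTop_iff_infinite.2 (hX k)

/-- Pick a strictly increasing `a` with `a (pair i j) ∈ X i`; then `C`, the values at even `j`,
meets each `X i` in the values at even `j` and misses the values at odd `j`. -/
theorem exists_splitting_of_seq (X : ℕ → Set ℕ) (hX : ∀ i, (X i).Infinite) :
    ∃ C : Set ℕ, ∀ i, (X i ∩ C).Infinite ∧ (X i \ C).Infinite := by
  obtain ⟨a, ha, haX⟩ := exists_strictMono_forall_mem (fun k => X k.unpair.1) fun k => hX _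
  have mem : ∀ i j, a (Nat.pair i j) ∈ X i := fun i j => by
    simpa only [Nat.unpair_pair] using haX (Nat.pair i j)
  have inj : ∀ i (f : ℕ → ℕ), f.Injective → (fun j => a (Nat.pair i (f j))).Injective :=
    fun i f hf j j' h => hf (Nat.pair_eq_pair.1 (ha.injective h)).2
  refine ⟨a '' {k | Even k.unpair.2}, fun i => ⟨?_, ?_⟩⟩
  · refine (Set.infinite_range_of_injective (inj i (2 * ·) ?_)).mono ?_
    · exact fun j j' h => by simpa using h
    · rintro _ ⟨j, rfl⟩
      exact ⟨mem i _, _, by simp, rfl⟩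
  · refine (Set.infinite_range_of_injective (inj i (2 * · + 1) ?_)).mono ?_
    · exact fun j j' h => by simpa using h
    · rintro _ ⟨j, rfl⟩
      refine ⟨mem i _, ?_⟩
      rintro ⟨k, hk, hak⟩
      rw [ha.injective.eq_iff] at hak
      simp [hak] at hk

theorem exists_splitting_of_countable {F : Set (Set ℕ)} (hF : F.Countable)
    (hinf : ∀ A ∈ F, A.Infinite) : ∃ C : Set ℕ, ∀ A ∈ F, (A ∩ C).Infinite ∧ (A \ C).Infinite := by
  rcases F.eq_empty_or_nonempty with rfl | hne
  · exact ⟨∅, by simp⟩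
  obtain ⟨X, rfl⟩ := hF.exists_eq_range hne
  obtain ⟨C, hC⟩ := exists_splitting_of_seq X fun i => hinf _ ⟨i, rfl⟩
  exact ⟨C, by simpa using hC⟩

theorem IsReaping.not_countable {𝒜 : Set (Set ℕ)} (h𝒜 : IsReaping 𝒜) : ¬ 𝒜.Countable := by
  intro hcount
  obtain ⟨C, hC⟩ := exists_splitting_of_countable (hcount.insert Set.univ)
    (Set.forall_mem_insert.2 ⟨Set.infinite_univ, h𝒜.1⟩)
  have hCinf : C.Infinite := by simpa using (hC _ (Set.mem_insert _ _)).1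
  obtain ⟨A, hA, hfin | hsub⟩ := h𝒜.2 C hCinf
  · exact (hC A (Set.mem_insert_of_mem _ hA)).1 hfin
  · exact (hC A (Set.mem_insert_of_mem _ hA)).2 hsub

theorem isStarTree_singleton_univ : IsStarTree {Set.univ} := by
  refine ⟨?_, rfl, ?_, ?_⟩
  · rintro A rfl
    exact Set.infinite_univ
  · rintro s rfl t rfl - -
    rfl
  · rintro t rfl S hS ⟨m, hm⟩
    refine ⟨m, hm, fun s hs => ?_⟩
    rw [(hS hs).1, (hS hm).1]
    exact almostSubset_refl _

theorem StarEndExt.trans {S T U : Set (Set ℕ)} (hST : StarEndExt S T) (hTU : StarEndExt T U) :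
    StarEndExt S U :=
  ⟨hST.1.trans hTU.1, fun s hs => (hTU.2 s (hST.1 hs)).trans (hST.2 s hs)⟩

theorem starPred_insert_of_forall_not_almostSubset {T : Set (Set ℕ)} {C : Set ℕ}
    (hbelow : ∀ B ∈ T, ¬ AlmostSubset B C) {s : Set ℕ} (hs : s ∈ T) :
    StarPred (insert C T) s = StarPred T s := by
  refine Set.Subset.antisymm ?_ fun t ht => ⟨Or.inr ht.1, ht.2⟩
  rintro t ⟨rfl | ht, hst⟩
  · exact absurd hst (hbelow s hs)
  · exact ⟨ht, hst⟩

theorem starEndExt_insert {T : Set (Set ℕ)} {C : Set ℕ} (hbelow : ∀ B ∈ T, ¬ AlmostSubset B C) :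
    StarEndExt T (insert C T) :=
  ⟨Set.subset_insert C T, fun _ hs => starPred_insert_of_forall_not_almostSubset hbelow hs⟩

theorem IsStarTree.insert {T : Set (Set ℕ)} (hT : IsStarTree T) {C : Set ℕ} (hC : C.Infinite)
    (hbelow : ∀ B ∈ T, ¬ AlmostSubset B C)
    (hchain : ∀ u ∈ T, ∀ v ∈ T, AlmostSubset C u → AlmostSubset C v →
      AlmostSubset u v ∨ AlmostSubset v u) :
    IsStarTree (insert C T) := by
  obtain ⟨hinf, huniv, hantisymm, hwf⟩ := hT
  refine ⟨Set.forall_mem_insert.2 ⟨hC, hinf⟩, Or.inr huniv, ?_, ?_⟩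
  · rintro s (rfl | hs) t (rfl | ht) hst hts
    · rfl
    · exact absurd hts (hbelow t ht)
    · exact absurd hst (hbelow s hs)
    · exact hantisymm s hs t ht hst hts
  rintro t (rfl | ht) S hS hSne
  swap
  · rw [starPred_insert_of_forall_not_almostSubset hbelow ht] at hS
    exact hwf t ht S hS hSne
  by_cases hST : ∃ B ∈ S, B ∈ T
  · -- the greatest element of `S` is that of its part lying above some `B ∈ S ∩ T`
    obtain ⟨B, hBS, hBT⟩ := hST
    have habove : ∀ s ∈ S, AlmostSubset t s := fun s hs => (hS hs).2
    obtain ⟨m, ⟨hmS, hmT, hBm⟩, hm⟩ := hwf B hBT {s ∈ S | s ∈ T ∧ AlmostSubset B s}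
      (fun s hs => ⟨hs.2.1, hs.2.2⟩) ⟨B, hBS, hBT, almostSubset_refl B⟩
    refine ⟨m, hmS, fun s hs => ?_⟩
    rcases (hS hs).1 with rfl | hsT
    · exact habove m hmS
    rcases hchain s hsT B hBT (habove s hs) (habove B hBS) with hsB | hBs
    · exact hsB.trans hBm
    · exact hm s ⟨hs, hsT, hBs⟩
  · push Not at hST
    have hSC : ∀ s ∈ S, s = t := fun s hs => (hS hs).1.resolve_right (hST s hs)
    obtain ⟨m, hm⟩ := hSne
    refine ⟨m, hm, fun s hs => ?_⟩
    rw [hSC s hs, hSC m hm]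
    exact almostSubset_refl t

theorem starPred_sUnion_of_isChain {c : Set (Set (Set ℕ))} (hc : IsChain StarEndExt c)
    {T : Set (Set ℕ)} (hT : T ∈ c) {s : Set ℕ} (hs : s ∈ T) :
    StarPred (⋃₀ c) s = StarPred T s := by
  refine Set.Subset.antisymm ?_ fun t ht => ⟨Set.mem_sUnion_of_mem ht.1 hT, ht.2⟩
  rintro t ⟨⟨T', hT', htT'⟩, hst⟩
  rcases eq_or_ne T T' with rfl | hne
  · exact ⟨htT', hst⟩
  rcases hc hT hT' hne with hTT' | hT'T
  · exact hTT'.2 s hs ▸ ⟨htT', hst⟩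
  · exact ⟨hT'T.1 htT', hst⟩

theorem starEndExt_sUnion_of_isChain {c : Set (Set (Set ℕ))} (hc : IsChain StarEndExt c)
    {T : Set (Set ℕ)} (hT : T ∈ c) : StarEndExt T (⋃₀ c) :=
  ⟨Set.subset_sUnion_of_mem hT, fun _ hs => starPred_sUnion_of_isChain hc hT hs⟩

theorem isStarTree_sUnion_of_isChain {c : Set (Set (Set ℕ))} (hc : IsChain StarEndExt c)
    (htree : ∀ T ∈ c, IsStarTree T) (hne : c.Nonempty) :
    IsStarTree (⋃₀ c) := by
  obtain ⟨T₀, hT₀⟩ := hne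
  refine ⟨?_, Set.mem_sUnion_of_mem (htree T₀ hT₀).2.1 hT₀, ?_, ?_⟩
  · rintro A ⟨T, hT, hAT⟩
    exact (htree T hT).1 A hAT
  · rintro s ⟨T, hT, hsT⟩ t ⟨T', hT', htT'⟩
    rcases eq_or_ne T T' with rfl | hne
    · exact (htree T hT).2.2.1 s hsT t htT'
    rcases hc hT hT' hne with hTT' | hT'T
    · exact (htree T' hT').2.2.1 s (hTT'.1 hsT) t htT'
    · exact (htree T hT).2.2.1 s hsT t (hT'T.1 htT')
  · rintro t ⟨T, hT, htT⟩
    rw [starPred_sUnion_of_isChain hc hT htT]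
    exact (htree T hT).2.2.2 t htT

theorem IsStarTree.isMaxStarTree_of_forall_starEndExt {T : Set (Set ℕ)} (hT : IsStarTree T)
    (hmax : ∀ T', IsStarTree T' → StarEndExt T T' → T' ⊆ T) : IsMaxStarTree T := by
  refine ⟨hT, fun C hC => ?_⟩
  by_contra! ⟨hbelow, hnosplit⟩
  have hchain : ∀ u ∈ T, ∀ v ∈ T, AlmostSubset C u → AlmostSubset C v →
      AlmostSubset u v ∨ AlmostSubset v u := fun u hu v hv hCu hCv => by
    by_contra! hincomp
    exact hnosplit u hu v hv ⟨hincomp.1, hincomp.2⟩ hCu hCv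
  have hCT : C ∈ T :=
    hmax _ (hT.insert hC hbelow hchain) (starEndExt_insert hbelow) (Set.mem_insert C T)
  exact hbelow C hCT (almostSubset_refl C)

theorem exists_isMaxStarTree : ∃ T : Set (Set ℕ), IsMaxStarTree T := by
  have : Nonempty {T : Set (Set ℕ) // IsStarTree T} := ⟨⟨_, isStarTree_singleton_univ⟩⟩
  obtain ⟨⟨M, hM⟩, hmax⟩ := exists_maximal_of_nonempty_chains_bounded
    (r := fun S T : {T : Set (Set ℕ) // IsStarTree T} => StarEndExt S.1 T.1)
    (fun c hc hne =>
      have hc' : IsChain StarEndExt (Subtype.val '' c) :=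
        hc.image_of_map_rel _ StarEndExt Subtype.val fun _ _ => id
      ⟨⟨_, isStarTree_sUnion_of_isChain hc' (Set.forall_mem_image.2 fun T _ => T.2) (hne.image _)⟩,
        fun T hT => starEndExt_sUnion_of_isChain hc' ⟨T, hT, rfl⟩⟩)
    StarEndExt.trans
  exact ⟨M, hM.isMaxStarTree_of_forall_starEndExt fun T' hT' hMT' => (hmax ⟨T', hT'⟩ hMT').1⟩

open Classical in
/-- Comparable pairs `(u, v)` contribute `u` itself, so that the family contains `T` and all its
members are infinite. -/
noncomputable def reapingFamilyOfTree (T : Set (Set ℕ)) : Set (Set ℕ) :=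
  (fun p : Set ℕ × Set ℕ => if AlmostSubset p.1 p.2 then p.1 else p.1 \ p.2) '' T ×ˢ T

theorem subset_reapingFamilyOfTree (T : Set (Set ℕ)) : T ⊆ reapingFamilyOfTree T :=
  fun u hu => ⟨(u, u), ⟨hu, hu⟩, if_pos (almostSubset_refl u)⟩

theorem IsMaxStarTree.isReaping_reapingFamilyOfTree {T : Set (Set ℕ)} (hT : IsMaxStarTree T) :
    IsReaping (reapingFamilyOfTree T) := by
  refine ⟨?_, fun B hB => ?_⟩
  · rintro _ ⟨⟨u, v⟩, ⟨hu, -⟩, rfl⟩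
    dsimp only
    split_ifs with huv
    · exact hT.1.1 u hu
    · exact huv
  rcases hT.2 B hB with ⟨s, hs, hsB⟩ | ⟨u, hu, v, hv, ⟨huv, -⟩, hBu, hBv⟩
  · exact ⟨s, subset_reapingFamilyOfTree T hs, Or.inr hsB⟩
  · refine ⟨u \ v, ⟨(u, v), ⟨hu, hv⟩, if_neg huv⟩, Or.inl ?_⟩
    exact hBv.subset fun n ⟨⟨_, hnv⟩, hnB⟩ => ⟨hnB, hnv⟩

theorem IsMaxStarTree.mk_reapingFamilyOfTree {T : Set (Set ℕ)} (hT : IsMaxStarTree T) :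
    Cardinal.mk (reapingFamilyOfTree T) = Cardinal.mk T := by
  have hTinf : T.Infinite := fun hfin =>
    hT.isReaping_reapingFamilyOfTree.not_countable ((hfin.prod hfin).image _).countable
  have hT₀ : Cardinal.aleph0 ≤ Cardinal.mk T := Cardinal.aleph0_le_mk_iff.2 hTinf.to_subtype
  refine le_antisymm ?_ (Cardinal.mk_le_mk_of_subset (subset_reapingFamilyOfTree T))
  calc Cardinal.mk (reapingFamilyOfTree T) ≤ Cardinal.mk (T ×ˢ T) := Cardinal.mk_image_le
    _ = Cardinal.mk T := by rw [Cardinal.mk_setProd, Cardinal.mul_eq_self hT₀]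

theorem reapingNumber_le_mk {𝒜 : Set (Set ℕ)} (h𝒜 : IsReaping 𝒜) :
    reapingNumber ≤ Cardinal.mk 𝒜 :=
  csInf_le' ⟨𝒜, h𝒜, rfl⟩

theorem exists_isMaxStarTree_mk_eq_treeNumber :
    ∃ T : Set (Set ℕ), IsMaxStarTree T ∧ Cardinal.mk T = treeNumber :=
  have ⟨T, hT⟩ := exists_isMaxStarTree
  csInf_mem (s := {c | ∃ T, IsMaxStarTree T ∧ Cardinal.mk T = c}) ⟨_, T, hT, rfl⟩

/-- `𝔯 ≤ 𝔱𝔯`: every maximal subtree of `([ω]^ω, ⊆*)` gives rise to a reaping family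
of the same cardinality, hence the least size of a maximal tree in `P(ω)/fin` is at
least the reaping number. -/
theorem reaping_le_treeNumber :
    (∀ T : Set (Set ℕ), IsMaxStarTree T →
      ∃ 𝒜 : Set (Set ℕ), IsReaping 𝒜 ∧ Cardinal.mk ↥𝒜 = Cardinal.mk ↥T) ∧
    reapingNumber ≤ treeNumber := by
  refine ⟨fun T hT => ⟨_, hT.isReaping_reapingFamilyOfTree, hT.mk_reapingFamilyOfTree⟩, ?_⟩
  obtain ⟨T, hT, hTtr⟩ := exists_isMaxStarTree_mk_eq_treeNumber
  calc reapingNumber ≤ Cardinal.mk (reapingFamilyOfTree T) :=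
        reapingNumber_le_mk hT.isReaping_reapingFamilyOfTree
    _ = treeNumber := hT.mk_reapingFamilyOfTree.trans hTtr
end

section
/- If a subtree T of ([ω]^ω, ⊆*) with countable levels contains nodes A_s for s ∈ 2^{<ω} such that A_s and A_t are ⊆*-incomparable for incomparable s, t ∈ 2^{<ω}, A_t ⊆* A_s for t extending s, each A_s with s ∈ 2^n lies on a level below α_n where (α_n) is strictly increasing with supremum α_ω, and for every f ∈ 2^ω there is a node A_f ∈ T on level α_ω with A_f ⊆* A_{f↾n} for all n, then level α_ω of T has size continuum — contradicting countability of levels. -/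
/-! The predecessors of a node of a star tree are well-ordered, hence linearly ordered, by
`⊆*`. If `f ≠ g` differ at `n`, then `A_{f↾(n+1)}` and `A_{g↾(n+1)}` are incomparable, so no
node lies below both; thus `f ↦ A_f` is injective from `2^ω` into the level of the `A_f`. -/

theorem exists_not_prefix_ofFn_of_ne {α : Type*} {f g : ℕ → α} (hfg : f ≠ g) :
    ∃ n, ¬ List.ofFn (fun i : Fin n => f i) <+: List.ofFn (fun i : Fin n => g i) ∧
      ¬ List.ofFn (fun i : Fin n => g i) <+: List.ofFn (fun i : Fin n => f i) := by
  obtain ⟨n, hn⟩ := Function.ne_iff.1 hfg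
  have hne : ∀ {u v : ℕ → α}, u n ≠ v n →
      List.ofFn (fun i : Fin (n + 1) => u i) ≠ List.ofFn (fun i : Fin (n + 1) => v i) :=
    fun huv h => huv (congrFun (List.ofFn_injective h) (Fin.last n))
  exact ⟨n + 1, fun h => hne hn (h.eq_of_length (by simp)),
    fun h => hne (Ne.symm hn) (h.eq_of_length (by simp))⟩

theorem IsStarTree.not_starIncomp_of_almostSubset {T : Set (Set ℕ)} (hT : IsStarTree T)
    {x a b : Set ℕ} (hx : x ∈ T) (ha : a ∈ T) (hb : b ∈ T) (hxa : AlmostSubset x a)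
    (hxb : AlmostSubset x b) : ¬ StarIncomp a b := by
  obtain ⟨m, hm, hmax⟩ := hT.2.2.2 x hx {a, b}
    (Set.insert_subset ⟨ha, hxa⟩ (Set.singleton_subset_iff.2 ⟨hb, hxb⟩))
    (Set.insert_nonempty a {b})
  rintro ⟨hab, hba⟩
  rcases hm with rfl | rfl
  · exact hba (hmax b (by simp))
  · exact hab (hmax a (by simp))

theorem IsStarTree.injective_of_almostSubset_ofFn {α : Type*} {T : Set (Set ℕ)}
    (hT : IsStarTree T) {A : List α → Set ℕ} (hmem : ∀ s, A s ∈ T)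
    (hinc : ∀ s t : List α, ¬ s <+: t → ¬ t <+: s → StarIncomp (A s) (A t))
    {Af : (ℕ → α) → Set ℕ} (hAf : ∀ f, Af f ∈ T)
    (hAfd : ∀ (f : ℕ → α) (n : ℕ),
      AlmostSubset (Af f) (A (List.ofFn fun i : Fin n => f i))) :
    Function.Injective Af := by
  intro f g hfg
  by_contra hne
  obtain ⟨n, hfg', hgf'⟩ := exists_not_prefix_ofFn_of_ne hne
  exact hT.not_starIncomp_of_almostSubset (hAf f) (hmem _) (hmem _) (hAfd f n)
    (hfg ▸ hAfd g n) (hinc _ _ hfg' hgf')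

theorem level_of_size_continuum_general (T : Set (Set ℕ)) (hT : IsStarTree T)
    (A : List Bool → Set ℕ) (hmem : ∀ s, A s ∈ T)
    (hinc : ∀ s t : List Bool, ¬ s <+: t → ¬ t <+: s → StarIncomp (A s) (A t))
    (Af : (ℕ → Bool) → Set ℕ) (hAf : ∀ f, Af f ∈ T)
    (hAfd : ∀ (f : ℕ → Bool) (n : ℕ),
      AlmostSubset (Af f) (A (List.ofFn fun i : Fin n => f i)))
    (hsame : ∀ f g : ℕ → Bool, SameLevel T (Af f) (Af g)) :
    Cardinal.continuum ≤
      Cardinal.mk ↥{x ∈ T | SameLevel T x (Af fun _ => false)} := by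
  let toLevel (f : ℕ → Bool) : {x ∈ T | SameLevel T x (Af fun _ => false)} :=
    ⟨Af f, hAf f, hsame f _⟩
  have hinj : Function.Injective toLevel := fun f g h =>
    hT.injective_of_almostSubset_ofFn hmem hinc hAf hAfd (congrArg Subtype.val h)
  calc Cardinal.continuum = Cardinal.mk (ℕ → Bool) := by simp
    _ ≤ _ := Cardinal.mk_le_of_injective hinj

/-- If a subtree `T` of `([ω]^ω, ⊆*)` contains nodes `A_s`, `s ∈ 2^{<ω}`, with `A_s`,
`A_t` incomparable for incomparable `s, t` and `A_t ⊆* A_s` for `t` extending `s`, and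
for every `f ∈ 2^ω` a node `A_f ⊆* A_{f↾n}` (for all `n`), all on one common level,
then that level has size (at least) continuum. -/
theorem level_of_size_continuum (T : Set (Set ℕ)) (hT : IsStarTree T)
    (A : List Bool → Set ℕ) (hmem : ∀ s, A s ∈ T)
    (hinc : ∀ s t : List Bool, ¬ s <+: t → ¬ t <+: s → StarIncomp (A s) (A t))
    (hdec : ∀ s t : List Bool, s <+: t → AlmostSubset (A t) (A s))
    (Af : (ℕ → Bool) → Set ℕ) (hAf : ∀ f, Af f ∈ T)
    (hAfd : ∀ (f : ℕ → Bool) (n : ℕ),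
      AlmostSubset (Af f) (A (List.ofFn fun i : Fin n => f i)))
    (hsame : ∀ f g : ℕ → Bool, SameLevel T (Af f) (Af g)) :
    Cardinal.continuum ≤
      Cardinal.mk ↥{x ∈ T | SameLevel T x (Af fun _ => false)} :=
  level_of_size_continuum_general T hT A hmem hinc Af hAf hAfd hsame
end

section
/- Suppose T = {A_s : s ∈ γ^{<ω}} is a wide-branching tree (with γ ≥ ω a limit ordinal), s ∈ γ^{<ω} \ {⟨⟩}, D, E ⊆ γ are finite with s(0) ∉ E, and F is a set with F ∩ A_t infinite for all t ∈ γ^{<ω}. Then F ∩ A_s \ (⋃_{β∈D} A_{s⌢⟨β⟩} ∪ ⋃_{α∈E} A_{⟨α⟩}) is infinite. -/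
/-!
Extend `s` by a child `δ < γ` lying above every element of `E` and outside `D`; it exists
because below a limit ordinal there are infinitely many ordinals above any given one. By (iv)
the node `A_{s⌢⟨δ⟩}` is almost disjoint from each `A_{s⌢⟨β⟩}` with `β ∈ D`, and by (v), applied
with `β := δ`, from each `A_{⟨α⟩}` with `α ∈ E`. Hence the infinite set `F ∩ A_{s⌢⟨δ⟩}`, which
lies inside `F ∩ A_s`, meets the removed union in a finite set only.
-/

/-- `s ∈ γ^{<ω}`: a finite sequence all of whose entries are `< γ`. -/
def InSeqs (γ : Ordinal) (s : List Ordinal) : Prop := ∀ x ∈ s, x < γ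

/-- `T = {A_s : s ∈ γ^{<ω}}` is a wide-branching tree (Definition 4.1) in
`(P(ω) \ {∅}, ⊆)`:
the root is `ω`, all nodes are infinite, (ii) `A_t ⊆ A_s` for `s ⊆ t` (prefix),
(iii) no `A_{⟨β⟩}` is covered by finitely many other `A_{⟨α⟩}` modulo a finite set,
(iv) each level `n ≥ 2` is an almost disjoint family, and (v) for `α ≤ β < γ` and
`s` of length `≥ 2` with `s(0) ≠ α` and `β ∈ ran(s)`, `A_s` and `A_{⟨α⟩}` are almost
disjoint. -/
def IsWideBranchingTree (γ : Ordinal) (A : List Ordinal → Set ℕ) : Prop :=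
  A [] = Set.univ ∧
  (∀ s : List Ordinal, InSeqs γ s → (A s).Infinite) ∧
  (∀ s t : List Ordinal, InSeqs γ t → s <+: t → A t ⊆ A s) ∧
  (∀ D : Finset Ordinal, (∀ α ∈ D, α < γ) → ∀ β < γ, β ∉ D →
    (A [β] \ ⋃ α ∈ D, A [α]).Infinite) ∧
  (∀ s t : List Ordinal, InSeqs γ s → InSeqs γ t → 2 ≤ s.length →
    s.length = t.length → s ≠ t → (A s ∩ A t).Finite) ∧
  (∀ α β : Ordinal, α ≤ β → β < γ → ∀ s : List Ordinal, InSeqs γ s →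
    2 ≤ s.length → s.head? ≠ some α → β ∈ s → (A s ∩ A [α]).Finite)

theorem Order.IsSuccLimit.infinite_Ico {α : Type*} [LinearOrder α] [SuccOrder α] {a b : α}
    (hb : Order.IsSuccLimit b) (hab : a < b) : (Set.Ico a b).Infinite := by
  intro hfin
  obtain ⟨x, ⟨hax, hxb⟩, hmax⟩ := hfin.exists_maximal ⟨a, le_rfl, hab⟩
  have hsucc : Order.succ x ∈ Set.Ico a b := ⟨hax.trans (Order.le_succ x), hb.succ_lt hxb⟩
  exact not_isMax_of_lt hxb (Order.succ_le_iff_isMax.mp (hmax hsucc (Order.le_succ x)))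

theorem InSeqs.append_singleton {γ δ : Ordinal} {s : List Ordinal} (hs : InSeqs γ s)
    (hδ : δ < γ) : InSeqs γ (s ++ [δ]) := by
  intro x hx
  rcases List.mem_append.mp hx with hx | hx
  · exact hs x hx
  · rwa [List.mem_singleton.mp hx]

namespace IsWideBranchingTree

variable {γ : Ordinal} {A : List Ordinal → Set ℕ}

theorem subset_of_append (hT : IsWideBranchingTree γ A) {s t : List Ordinal}
    (hst : InSeqs γ (s ++ t)) : A (s ++ t) ⊆ A s :=
  hT.2.2.1 s (s ++ t) hst (List.prefix_append s t)

theorem finite_inter_append_of_ne (hT : IsWideBranchingTree γ A) {s : List Ordinal}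
    (hsne : s ≠ []) {β δ : Ordinal} (hsβ : InSeqs γ (s ++ [β])) (hsδ : InSeqs γ (s ++ [δ]))
    (hβδ : β ≠ δ) : (A (s ++ [δ]) ∩ A (s ++ [β])).Finite :=
  hT.2.2.2.2.1 _ _ hsδ hsβ (by simpa [Nat.one_le_iff_ne_zero] using hsne) (by simp)
    (by simpa using hβδ.symm)

theorem finite_inter_singleton_of_le (hT : IsWideBranchingTree γ A) {s : List Ordinal}
    (hsne : s ≠ []) {α δ : Ordinal} (hsδ : InSeqs γ (s ++ [δ])) (hδ : δ < γ) (hαδ : α ≤ δ)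
    (hs0 : s.head? ≠ some α) : (A (s ++ [δ]) ∩ A [α]).Finite :=
  hT.2.2.2.2.2 α δ hαδ hδ _ hsδ (by simpa [Nat.one_le_iff_ne_zero] using hsne)
    (by rwa [List.head?_append_of_ne_nil s hsne]) (by simp)

end IsWideBranchingTree

theorem wideBranching_positivity_general (γ : Ordinal)
    (hγ : Order.IsSuccLimit γ) (A : List Ordinal → Set ℕ)
    (hT : IsWideBranchingTree γ A)
    (s : List Ordinal) (hs : InSeqs γ s) (hsne : s ≠ [])
    (D E : Finset Ordinal) (hD : ∀ β ∈ D, β < γ) (hE : ∀ α ∈ E, α < γ)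
    (hs0 : ∀ α ∈ E, s.head? ≠ some α)
    (F : Set ℕ) (hF : ∀ t : List Ordinal, InSeqs γ t → (F ∩ A t).Infinite) :
    ((F ∩ A s) \ ((⋃ β ∈ D, A (s ++ [β])) ∪ ⋃ α ∈ E, A [α])).Infinite := by
  have hsup : E.sup id < γ := (Finset.sup_lt_iff hγ.bot_lt).mpr hE
  obtain ⟨δ, ⟨hEδ, hδγ⟩, hδD⟩ := (hγ.infinite_Ico hsup).exists_notMem_finset D
  have hsδ : InSeqs γ (s ++ [δ]) := hs.append_singleton hδγ
  have hremoved : (A (s ++ [δ]) ∩ ((⋃ β ∈ D, A (s ++ [β])) ∪ ⋃ α ∈ E, A [α])).Finite := by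
    rw [Set.inter_union_distrib_left, Set.inter_iUnion₂, Set.inter_iUnion₂]
    refine (D.finite_toSet.biUnion fun β hβ => ?_).union (E.finite_toSet.biUnion fun α hα => ?_)
    · exact hT.finite_inter_append_of_ne hsne (hs.append_singleton (hD β hβ)) hsδ
        (ne_of_mem_of_not_mem hβ hδD)
    · exact hT.finite_inter_singleton_of_le hsne hsδ hδγ
        ((Finset.le_sup (f := id) hα).trans hEδ) (hs0 α hα)
  refine ((hF _ hsδ).sdiff hremoved).mono ?_
  rintro x ⟨⟨hxF, hxδ⟩, hx⟩
  exact ⟨⟨hxF, hT.subset_of_append hsδ hxδ⟩, fun h => hx ⟨hxδ, h⟩⟩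

/-- In a wide-branching tree, if `F ∩ A_t` is infinite for all `t ∈ γ^{<ω}`, then for
any `s ≠ ⟨⟩`, finite `D, E ⊆ γ` with `s(0) ∉ E`, the set
`F ∩ A_s \ (⋃_{β∈D} A_{s⌢⟨β⟩} ∪ ⋃_{α∈E} A_{⟨α⟩})` is infinite. -/
theorem wideBranching_positivity (γ : Ordinal) (hγω : Ordinal.omega0 ≤ γ)
    (hγ : Order.IsSuccLimit γ) (A : List Ordinal → Set ℕ)
    (hT : IsWideBranchingTree γ A)
    (s : List Ordinal) (hs : InSeqs γ s) (hsne : s ≠ [])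
    (D E : Finset Ordinal) (hD : ∀ β ∈ D, β < γ) (hE : ∀ α ∈ E, α < γ)
    (hs0 : ∀ α ∈ E, s.head? ≠ some α)
    (F : Set ℕ) (hF : ∀ t : List Ordinal, InSeqs γ t → (F ∩ A t).Infinite) :
    ((F ∩ A s) \ ((⋃ β ∈ D, A (s ++ [β])) ∪ ⋃ α ∈ E, A [α])).Infinite :=
  wideBranching_positivity_general γ hγ A hT s hs hsne D E hD hE hs0 F hF
end
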